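/- arXiv:2505.14461 — 2 statements merged into one kernel-verified Lean document; each statement's English description precedes it below -/
import Mathlib

section
/- Let K be a finite type, let p be a probability mass function on a type Ω, let G : Ω → Finset K, and let μ be a real number with 0 ≤ μ ≤ 1. Suppose ∑'_{ω ∈ Ω} p(ω) · |G(ω)| ≥ (1 - μ) · |K|. Then the number of elements k ∈ K satisfying ∑'_{ω : k ∈ G(ω)} p(ω) ≥ 1 - √μ is at least (1 - √μ) · |K|. -/
open scoped ENNReal

/-- Averaging argument: if on average (over `ω ~ p`) the "good" set `G ω ⊆ K`
contains at least a `(1 - μ)`-fraction of `K`, then at least a `(1 - √μ)`-fraction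
of the elements `k ∈ K` are good with probability at least `1 - √μ` over `ω`. -/
theorem averaging_good_set {K Ω : Type*} [Fintype K]
    (p : PMF Ω) (G : Ω → Finset K) (μ : ℝ) (hμ0 : 0 ≤ μ) (hμ1 : μ ≤ 1)
    (havg : (1 - μ) * (Fintype.card K : ℝ) ≤
      ∑' ω, (p ω).toReal * ((G ω).card : ℝ)) :
    (1 - Real.sqrt μ) * (Fintype.card K : ℝ) ≤
      ({k : K | 1 - Real.sqrt μ ≤
        ∑' ω : {ω : Ω // k ∈ G ω}, (p ω.1).toReal}).ncard := by
  classical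
  set r := Real.sqrt μ with hr
  have hr0 : 0 ≤ r := Real.sqrt_nonneg μ
  have hrr : r * r = μ := Real.mul_self_sqrt hμ0
  set n := (Fintype.card K : ℝ) with hn
  have hn0 : 0 ≤ n := Nat.cast_nonneg _
  -- the good-probability in ℝ≥0∞
  set q : K → ℝ≥0∞ := fun k => ∑' ω : {ω : Ω // k ∈ G ω}, p ω.1 with hq
  have hq_le : ∀ k, q k ≤ 1 := by
    intro k
    calc q k = ∑' ω, Set.indicator {ω | k ∈ G ω} p ω := tsum_subtype _ _
      _ ≤ ∑' ω, p ω := ENNReal.tsum_le_tsum (fun ω => Set.indicator_le_self _ _ _)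
      _ = 1 := p.tsum_coe
  have hq_ne : ∀ k, q k ≠ ∞ := fun k => ne_top_of_le_ne_top ENNReal.one_ne_top (hq_le k)
  set f : K → ℝ := fun k => (q k).toReal with hf
  have hf_eq : ∀ k, (∑' ω : {ω : Ω // k ∈ G ω}, (p ω.1).toReal) = f k := by
    intro k
    rw [hf]
    exact (ENNReal.tsum_toReal_eq (fun (ω : {ω : Ω // k ∈ G ω}) => PMF.apply_ne_top p ω.1)).symm
  have hf_le : ∀ k, f k ≤ 1 := by
    intro k
    have := ENNReal.toReal_mono ENNReal.one_ne_top (hq_le k)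
    simpa using this
  have hf_nonneg : ∀ k, 0 ≤ f k := fun k => ENNReal.toReal_nonneg
  -- Fubini in ℝ≥0∞
  have hsum : ∑ k, q k = ∑' ω, p ω * ((G ω).card : ℝ≥0∞) := by
    have h1 : ∀ k, q k = ∑' ω, if k ∈ G ω then p ω else 0 := by
      intro k
      have h0 : (∑' ω : {ω : Ω // k ∈ G ω}, p ω.1)
          = ∑' ω, Set.indicator {ω | k ∈ G ω} p ω := tsum_subtype _ _
      show (∑' ω : {ω : Ω // k ∈ G ω}, p ω.1) = _
      rw [h0]
      congr 1
      ext ω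
      simp [Set.indicator_apply]
    simp_rw [h1]
    rw [← Summable.tsum_finsetSum (fun k _ => ENNReal.summable)]
    congr 1
    ext ω
    rw [Finset.sum_ite_mem, Finset.univ_inter, Finset.sum_const, nsmul_eq_mul, mul_comm]
  -- Real version of the total mass identity
  have htotal : ∑ k, f k = ∑' ω, (p ω).toReal * ((G ω).card : ℝ) := by
    rw [hf]
    rw [← ENNReal.toReal_sum (fun k _ => hq_ne k), hsum,
      ENNReal.tsum_toReal_eq (fun ω => by
        exact ENNReal.mul_ne_top (PMF.apply_ne_top p ω) (ENNReal.natCast_ne_top _))]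
    congr 1
    ext ω
    simp [ENNReal.toReal_mul]
  have havg' : (1 - μ) * n ≤ ∑ k, f k := by rw [htotal]; exact havg
  -- the good finset
  set S : Finset K := Finset.univ.filter (fun k => 1 - r ≤ f k) with hS
  have hset : {k : K | 1 - r ≤ ∑' ω : {ω : Ω // k ∈ G ω}, (p ω.1).toReal} = ↑S := by
    ext k
    simp [hS, hf_eq k]
  rw [hset, Set.ncard_coe_finset]
  set s := (S.card : ℝ) with hs
  have hs0 : 0 ≤ s := Nat.cast_nonneg _
  -- upper bound on the total
  have hbound : ∑ k, f k ≤ s + (n - s) * (1 - r) := by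
    rw [← Finset.sum_filter_add_sum_filter_not Finset.univ (fun k => 1 - r ≤ f k)]
    have h1 : ∑ k ∈ Finset.univ.filter (fun k => 1 - r ≤ f k), f k ≤ s := by
      rw [hs, hS]
      calc ∑ k ∈ Finset.univ.filter (fun k => 1 - r ≤ f k), f k
          ≤ ∑ _k ∈ Finset.univ.filter (fun k => 1 - r ≤ f k), (1 : ℝ) :=
            Finset.sum_le_sum (fun k _ => hf_le k)
        _ = _ := by simp
    have h2 : ∑ k ∈ Finset.univ.filter (fun k => ¬(1 - r ≤ f k)), f k ≤ (n - s) * (1 - r) := by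
      have hcard : ((Finset.univ.filter (fun k => ¬(1 - r ≤ f k))).card : ℝ) = n - s := by
        rw [hn, hs, hS]
        have := Finset.card_filter_add_card_filter_not
          (s := (Finset.univ : Finset K)) (p := fun k => 1 - r ≤ f k)
        simp only [Finset.card_univ] at this
        push_cast [← this]
        ring
      calc ∑ k ∈ Finset.univ.filter (fun k => ¬(1 - r ≤ f k)), f k
          ≤ ∑ _k ∈ Finset.univ.filter (fun k => ¬(1 - r ≤ f k)), (1 - r) :=
            Finset.sum_le_sum (fun k hk => by
              simp only [Finset.mem_filter] at hk
              exact le_of_lt (lt_of_not_ge hk.2))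
        _ = _ := by rw [Finset.sum_const, nsmul_eq_mul, hcard]
    linarith
  -- final arithmetic
  rcases eq_or_lt_of_le hμ0 with hμ | hμ
  · -- μ = 0 : every k is good
    have hr' : r = 0 := by rw [hr, ← hμ, Real.sqrt_zero]
    have hall : ∀ k, 1 ≤ f k := by
      by_contra h
      push_neg at h
      obtain ⟨k₀, hk₀⟩ := h
      have hlt : ∑ k, f k < ∑ _k : K, (1 : ℝ) :=
        Finset.sum_lt_sum (fun k _ => hf_le k) ⟨k₀, Finset.mem_univ _, hk₀⟩
      rw [Finset.sum_const, nsmul_eq_mul, mul_one, Finset.card_univ] at hlt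
      rw [← hμ] at havg'
      simp only [sub_zero, one_mul] at havg'
      rw [hn] at havg'
      linarith
    have : S = Finset.univ := by
      rw [hS]
      apply Finset.eq_univ_iff_forall.mpr
      intro k
      simp only [Finset.mem_filter, Finset.mem_univ, true_and, hr']
      linarith [hall k]
    rw [hr']
    rw [hs, this, Finset.card_univ, hn]
    linarith
  · -- μ > 0
    have hrpos : 0 < r := Real.sqrt_pos.mpr hμ
    have key : (1 - r * r) * n ≤ s + (n - s) * (1 - r) := by
      rw [hrr]; linarith
    nlinarith [mul_le_mul_of_nonneg_left key (le_of_lt hrpos)]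
end

section
/- Let α be a finite type and let p be a probability mass function on Option α. Let ε be a real number with 0 ≤ ε ≤ 1/4. Suppose p(none) ≤ 2ε, and suppose the sum over all ordered pairs (a, b) of distinct elements of α of p(some a)·p(some b) is at most ε. Then there exists a ∈ α with p(some a) ≥ 1 - 4ε. -/
/-!
Write `q a = p (some a)` and `S = ∑ q`, so `S ≥ 1 - 2ε`. The mass on distinct pairs is
`S² - ∑ q² ≥ S² - S · max q`, hence `S · max q ≥ S² - ε`. Since `S ↦ S - ε / S` is increasing,
`max q ≥ (1 - 2ε) - ε / (1 - 2ε)`, and this is at least `1 - 4ε` exactly when `ε ≤ 1/4`.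
-/

open Finset

theorem Finset.sum_offDiag_mul_eq {ι R : Type*} [CommRing R] [DecidableEq ι] (s : Finset ι)
    (f : ι → R) : ∑ x ∈ s.offDiag, f x.1 * f x.2 = (∑ i ∈ s, f i) ^ 2 - ∑ i ∈ s, f i ^ 2 := by
  rw [sq, sum_mul_sum, ← sum_product', ← diag_union_offDiag,
    sum_union (disjoint_diag_offDiag s), sum_diag]
  simp only [sq]
  ring

theorem Finset.sum_sq_le_sum_mul {ι : Type*} {s : Finset ι} {f : ι → ℝ} {M : ℝ}
    (hf : ∀ i ∈ s, 0 ≤ f i) (hM : ∀ i ∈ s, f i ≤ M) :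
    ∑ i ∈ s, f i ^ 2 ≤ (∑ i ∈ s, f i) * M := by
  rw [sum_mul]
  exact sum_le_sum fun i hi => by
    rw [sq]; exact mul_le_mul_of_nonneg_left (hM i hi) (hf i hi)

theorem PMF.sum_toReal_some {α : Type*} [Fintype α] (p : PMF (Option α)) :
    ∑ a, (p (some a)).toReal = 1 - (p none).toReal := by
  have h := congrArg ENNReal.toReal p.tsum_coe
  rw [ENNReal.tsum_toReal_eq p.apply_ne_top, tsum_fintype, Fintype.sum_option,
    ENNReal.toReal_one] at h
  linarith

theorem one_sub_four_mul_le_of_sq_sub_mul_le {S M ε : ℝ} (hε0 : 0 ≤ ε) (hε1 : ε ≤ 1 / 4)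
    (hS : 1 - 2 * ε ≤ S) (h : S ^ 2 - S * M ≤ ε) : 1 - 4 * ε ≤ M := by
  have hSpos : 0 < S := by linarith
  -- `S² - (1 - 4ε) S - ε = (S - (1 - 2ε)) (S + 2ε) + ε (1 - 4ε)`
  have key : ε ≤ S ^ 2 - S * (1 - 4 * ε) := by
    nlinarith [mul_nonneg (sub_nonneg.2 hS) (by linarith : 0 ≤ S + 2 * ε),
      mul_nonneg hε0 (by linarith : 0 ≤ 1 - 4 * ε)]
  by_contra! hM
  nlinarith [mul_lt_mul_of_pos_left hM hSpos]

theorem Finset.exists_one_sub_four_mul_le_of_sum_offDiag_le {ι : Type*} [DecidableEq ι]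
    {s : Finset ι} {f : ι → ℝ} {ε : ℝ} (hf : ∀ i ∈ s, 0 ≤ f i) (hε0 : 0 ≤ ε)
    (hε1 : ε ≤ 1 / 4) (hmass : 1 - 2 * ε ≤ ∑ i ∈ s, f i)
    (hcol : ∑ x ∈ s.offDiag, f x.1 * f x.2 ≤ ε) : ∃ i ∈ s, 1 - 4 * ε ≤ f i := by
  have hne : s.Nonempty := nonempty_of_sum_ne_zero (f := f) (by linarith)
  obtain ⟨i, hi, hmax⟩ := exists_max_image s f hne
  refine ⟨i, hi, one_sub_four_mul_le_of_sq_sub_mul_le hε0 hε1 hmass ?_⟩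
  rw [sum_offDiag_mul_eq] at hcol
  linarith [sum_sq_le_sum_mul hf hmax]

theorem exists_heavy_output_general {α : Type*} [Fintype α] [DecidableEq α]
    (p : PMF (Option α)) (ε : ℝ) (hε1 : ε ≤ 1 / 4)
    (hnone : (p none).toReal ≤ 2 * ε)
    (hcol : ∑ x ∈ Finset.univ.filter (fun x : α × α => x.1 ≠ x.2),
        (p (some x.1)).toReal * (p (some x.2)).toReal ≤ ε) :
    ∃ a : α, 1 - 4 * ε ≤ (p (some a)).toReal := by
  have hε0 : 0 ≤ ε := by linarith [(p none).toReal_nonneg]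
  have hoff : univ.filter (fun x : α × α => x.1 ≠ x.2) = univ.offDiag := by ext; simp
  rw [hoff] at hcol
  obtain ⟨a, -, ha⟩ := exists_one_sub_four_mul_le_of_sum_offDiag_le
    (fun a _ => ENNReal.toReal_nonneg) hε0 hε1 (by rw [p.sum_toReal_some]; linarith) hcol
  exact ⟨a, ha⟩

/-- If a distribution on `Option α` puts mass at most `2ε` on `none` and the
probability that two independent samples are distinct non-`none` values is at
most `ε` (with `0 ≤ ε ≤ 1/4`), then some `some a` has mass at least `1 - 4ε`. -/
theorem exists_heavy_output {α : Type*} [Fintype α] [DecidableEq α]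
    (p : PMF (Option α)) (ε : ℝ) (hε0 : 0 ≤ ε) (hε1 : ε ≤ 1 / 4)
    (hnone : (p none).toReal ≤ 2 * ε)
    (hcol : ∑ x ∈ Finset.univ.filter (fun x : α × α => x.1 ≠ x.2),
        (p (some x.1)).toReal * (p (some x.2)).toReal ≤ ε) :
    ∃ a : α, 1 - 4 * ε ≤ (p (some a)).toReal :=
  exists_heavy_output_general p ε hε1 hnone hcol
end
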